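/- Let (B,P,f) be a ground-truth tree on blocks B = {B₁,…,B_k}, let 0 ≤ α < 1, and let sim be a symmetric function on pairs of distinct blocks satisfying (1−α)·f(LCA_P(B_i,B_j)) ≤ sim(B_i,B_j) ≤ (1+α)·f(LCA_P(B_i,B_j)) for all i ≠ j. Consider the greedy max-linkage procedure: maintain a collection 𝒞 of groups of blocks, initially the singletons {B₁},…,{B_k}, with group similarity Sim(S,S') = max over B ∈ S, B' ∈ S' of sim(B,B'); repeatedly merge the two groups in 𝒞 of maximum group similarity into a new group, recording at the created internal node the value f'(node) = Sim of the merged pair, until one group remains; let T be the resulting binary tree over the blocks. Then for all i ≠ j: (1−α)·f(LCA_P(B_i,B_j)) ≤ f'(LCA_T(B_i,B_j)) ≤ (1+α)·f(LCA_P(B_i,B_j)). -/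

import Mathlib

/-!
The values `d i j = f (P.lca i j)` satisfy the ultrametric inequality
`min (d i k) (d k j) ≤ d i j`, since of the three least common ancestors the two highest coincide
and `f` decreases towards the root. Along a greedy run one maintains that the recorded values
inside every current group approximate `d` within the factors `1 ± α`, and that the group
similarity of two current groups is at most `(1 + α) * d i j` for every cross pair `i, j`.
The lower bound at a new node is immediate from `(1 - α) * d ≤ sim`. The cross bound survives
the merge of `T₁, T₂`: for a third group `S`, `i ∈ T₂` and `j ∈ S`, pick any `k ∈ T₁`;
`groupSim T₁ S` is bounded by `(1 + α) * d k j` by the invariant and by `(1 + α) * d i k`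
through `groupSim T₁ S ≤ groupSim T₁ T₂` (greediness), hence by `(1 + α) * d i j`.
-/

inductive BTree (V : Type) : Type
  | leaf : V → BTree V
  | node : BTree V → BTree V → BTree V
  deriving DecidableEq

namespace BTree

variable {V : Type} [DecidableEq V]

def leavesList : BTree V → List V
  | leaf x => [x]
  | node L R => L.leavesList ++ R.leavesList

def leaves (T : BTree V) : Finset V :=
  T.leavesList.toFinset

theorem leaves_nonempty (T : BTree V) : T.leaves.Nonempty := by
  induction T with
  | leaf x => exact ⟨x, by simp [leaves, leavesList]⟩
  | node L R ihL ihR =>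
    obtain ⟨x, hx⟩ := ihL
    refine ⟨x, ?_⟩
    simp only [leaves, leavesList, List.toFinset_append, Finset.mem_union]
    exact Or.inl hx

/-- The least common ancestor of two leaves `i, j`: the smallest subtree containing both. -/
def lca : BTree V → V → V → BTree V
  | leaf x, _, _ => leaf x
  | node L R, i, j =>
    if i ∈ L.leaves ∧ j ∈ L.leaves then L.lca i j
    else if i ∈ R.leaves ∧ j ∈ R.leaves then R.lca i j
    else node L R

/-- `Subtree S T` : `S` is a subtree of `T` (rooted at some node of `T`). -/
inductive Subtree : BTree V → BTree V → Prop
  | refl (T : BTree V) : Subtree T T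
  | left {S L R : BTree V} : Subtree S L → Subtree S (node L R)
  | right {S L R : BTree V} : Subtree S R → Subtree S (node L R)

end BTree

section
variable {ι : Type} [DecidableEq ι]

/-- The group similarity of two groups of blocks: the maximum of `sim` over pairs of blocks,
one from each group. -/
noncomputable def groupSim (sim : ι → ι → ℝ) (T₁ T₂ : BTree ι) : ℝ :=
  (T₁.leaves ×ˢ T₂.leaves).sup'
    ((T₁.leaves_nonempty).product (T₂.leaves_nonempty)) fun q => sim q.1 q.2

/-- One step of the greedy max-linkage procedure: merge two (distinct) groups of the current
collection that have maximum group similarity. -/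
inductive GreedyStep (sim : ι → ι → ℝ) : Finset (BTree ι) → Finset (BTree ι) → Prop
  | step (C : Finset (BTree ι)) (T₁ T₂ : BTree ι) (h₁ : T₁ ∈ C) (h₂ : T₂ ∈ C) (hne : T₁ ≠ T₂)
      (hmax : ∀ S₁ ∈ C, ∀ S₂ ∈ C, S₁ ≠ S₂ → groupSim sim S₁ S₂ ≤ groupSim sim T₁ T₂) :
      GreedyStep sim C (insert (BTree.node T₁ T₂) ((C.erase T₁).erase T₂))

/-- The value `f'` recorded at each internal node created by the procedure: the group
similarity of the two merged groups (its two children). -/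
noncomputable def recordedVal (sim : ι → ι → ℝ) : BTree ι → ℝ
  | .leaf _ => 0
  | .node L R => groupSim sim L R

end

namespace BTree

variable {V : Type} [DecidableEq V]

@[simp]
theorem leaves_leaf (x : V) : (leaf x : BTree V).leaves = {x} := by
  simp [leaves, leavesList]

@[simp]
theorem leaves_node (L R : BTree V) : (node L R).leaves = L.leaves ∪ R.leaves := by
  simp [leaves, leavesList]

theorem nodup_node_iff {L R : BTree V} :
    (node L R).leavesList.Nodup ↔
      L.leavesList.Nodup ∧ R.leavesList.Nodup ∧ Disjoint L.leaves R.leaves := by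
  simp only [leavesList, List.nodup_append, leaves, List.disjoint_toFinset_iff_disjoint,
    List.Disjoint]
  grind

theorem lca_subtree (T : BTree V) (i j : V) : Subtree (T.lca i j) T := by
  induction T with
  | leaf x => exact Subtree.refl _
  | node L R ihL ihR =>
    simp only [lca]
    split_ifs
    · exact Subtree.left ihL
    · exact Subtree.right ihR
    · exact Subtree.refl _

theorem lca_comm (T : BTree V) (i j : V) : T.lca i j = T.lca j i := by
  induction T with
  | leaf x => rfl
  | node L R ihL ihR => simp only [lca, and_comm, ihL, ihR]

theorem lca_node_of_mem_left {L R : BTree V} {i j : V} (hi : i ∈ L.leaves) (hj : j ∈ L.leaves) :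
    (node L R).lca i j = L.lca i j := by
  simp [lca, hi, hj]

theorem lca_node_of_mem_right {L R : BTree V} {i j : V} (hLR : Disjoint L.leaves R.leaves)
    (hi : i ∈ R.leaves) (hj : j ∈ R.leaves) : (node L R).lca i j = R.lca i j := by
  simp [lca, hi, hj, Finset.disjoint_right.mp hLR hi]

theorem lca_node_of_mem_left_right {L R : BTree V} {i j : V} (hLR : Disjoint L.leaves R.leaves)
    (hi : i ∈ L.leaves) (hj : j ∈ R.leaves) : (node L R).lca i j = node L R := by
  simp [lca, Finset.disjoint_left.mp hLR hi, Finset.disjoint_right.mp hLR hj]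

theorem lca_subtree_lca_or {T : BTree V} (hT : T.leavesList.Nodup) {i k j : V}
    (hi : i ∈ T.leaves) (hk : k ∈ T.leaves) (hj : j ∈ T.leaves) :
    Subtree (T.lca i j) (T.lca i k) ∨ Subtree (T.lca i j) (T.lca k j) := by
  induction T with
  | leaf x => exact Or.inl (Subtree.refl _)
  | node L R ihL ihR =>
    obtain ⟨hL, hR, hLR⟩ := nodup_node_iff.mp hT
    have hLR' := hLR.symm
    rw [leaves_node, Finset.mem_union] at hi hk hj
    rcases hi with hi | hi <;> rcases hj with hj | hj <;> rcases hk with hk | hk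
    all_goals simp_all [lca, Finset.disjoint_left, Subtree.refl]
    exacts [.left (lca_subtree L i j), .right (lca_subtree R i j)]

theorem min_le_of_antitone_lca {P : BTree V} (hP : P.leavesList.Nodup) {f : BTree V → ℝ}
    (hf : ∀ S S', Subtree S' S → Subtree S P → f S ≤ f S') {i k j : V}
    (hi : i ∈ P.leaves) (hk : k ∈ P.leaves) (hj : j ∈ P.leaves) :
    min (f (P.lca i k)) (f (P.lca k j)) ≤ f (P.lca i j) := by
  rcases lca_subtree_lca_or hP hi hk hj with h | h
  · exact min_le_of_left_le (hf _ _ h (lca_subtree P i k))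
  · exact min_le_of_right_le (hf _ _ h (lca_subtree P k j))

end BTree

section GroupSim

variable {ι : Type} [DecidableEq ι] {sim : ι → ι → ℝ}

theorem le_groupSim {A B : BTree ι} {i j : ι} (hi : i ∈ A.leaves) (hj : j ∈ B.leaves) :
    sim i j ≤ groupSim sim A B :=
  Finset.le_sup' (b := (i, j)) (fun q : ι × ι => sim q.1 q.2) (Finset.mem_product.mpr ⟨hi, hj⟩)

@[simp]
theorem groupSim_leaf (a b : ι) : groupSim sim (.leaf a) (.leaf b) = sim a b := by
  simp [groupSim]

theorem groupSim_node_left (L R S : BTree ι) :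
    groupSim sim (.node L R) S = max (groupSim sim L S) (groupSim sim R S) := by
  simp only [groupSim, BTree.leaves_node, Finset.union_product]
  exact Finset.sup'_union _ _ _

theorem groupSim_node_right (S L R : BTree ι) :
    groupSim sim S (.node L R) = max (groupSim sim S L) (groupSim sim S R) := by
  simp only [groupSim, BTree.leaves_node, Finset.product_union]
  exact Finset.sup'_union _ _ _

end GroupSim

theorem le_mul_of_min_le {ι : Type*} {d : ι → ι → ℝ} (hd : ∀ i k j, min (d i k) (d k j) ≤ d i j)
    {c x : ℝ} (hc : 0 ≤ c) {i k j : ι} (hik : x ≤ c * d i k) (hkj : x ≤ c * d k j) :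
    x ≤ c * d i j :=
  calc x ≤ min (c * d i k) (c * d k j) := le_min hik hkj
    _ = c * min (d i k) (d k j) := (mul_min_of_nonneg _ _ hc).symm
    _ ≤ c * d i j := mul_le_mul_of_nonneg_left (hd i k j) hc

section MaxLinkage

variable {ι : Type} [DecidableEq ι] {sim d : ι → ι → ℝ} {α : ℝ}

variable (sim d α) in
def RecordedApprox (S : BTree ι) : Prop :=
  ∀ i ∈ S.leaves, ∀ j ∈ S.leaves, i ≠ j →
    (1 - α) * d i j ≤ recordedVal sim (S.lca i j) ∧ recordedVal sim (S.lca i j) ≤ (1 + α) * d i j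

variable (sim d α) in
def GroupSimBounded (S₁ S₂ : BTree ι) : Prop :=
  ∀ i ∈ S₁.leaves, ∀ j ∈ S₂.leaves, groupSim sim S₁ S₂ ≤ (1 + α) * d i j

theorem recordedApprox_leaf (x : ι) : RecordedApprox sim d α (.leaf x) := by
  intro i hi j hj hij
  simp_all

theorem RecordedApprox.node {T₁ T₂ : BTree ι} (hd : ∀ i j, d i j = d j i)
    (hsim : ∀ i j, i ≠ j → (1 - α) * d i j ≤ sim i j) (hT : Disjoint T₁.leaves T₂.leaves)
    (h₁ : RecordedApprox sim d α T₁) (h₂ : RecordedApprox sim d α T₂)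
    (h₁₂ : GroupSimBounded sim d α T₁ T₂) : RecordedApprox sim d α (.node T₁ T₂) := by
  have across : ∀ i ∈ T₁.leaves, ∀ j ∈ T₂.leaves,
      (1 - α) * d i j ≤ recordedVal sim ((BTree.node T₁ T₂).lca i j) ∧
        recordedVal sim ((BTree.node T₁ T₂).lca i j) ≤ (1 + α) * d i j := by
    intro i hi j hj
    rw [BTree.lca_node_of_mem_left_right hT hi hj]
    have hij : i ≠ j := fun h => Finset.disjoint_left.mp hT hi (h ▸ hj)
    exact ⟨(hsim i j hij).trans (le_groupSim hi hj), h₁₂ i hi j hj⟩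
  intro i hi j hj hij
  rw [BTree.leaves_node, Finset.mem_union] at hi hj
  rcases hi with hi | hi <;> rcases hj with hj | hj
  · rw [BTree.lca_node_of_mem_left hi hj]
    exact h₁ i hi j hj hij
  · exact across i hi j hj
  · rw [BTree.lca_comm, hd]
    exact across j hj i hi
  · rw [BTree.lca_node_of_mem_right hT hi hj]
    exact h₂ i hi j hj hij

theorem GroupSimBounded.node_left {T₁ T₂ S : BTree ι} (hd : ∀ i j, d i j = d j i)
    (hultra : ∀ i k j, min (d i k) (d k j) ≤ d i j) (hα : 0 ≤ 1 + α)
    (h₁₂ : GroupSimBounded sim d α T₁ T₂)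
    (h₁ : GroupSimBounded sim d α T₁ S) (h₂ : GroupSimBounded sim d α T₂ S)
    (hmax₁ : groupSim sim T₁ S ≤ groupSim sim T₁ T₂)
    (hmax₂ : groupSim sim T₂ S ≤ groupSim sim T₁ T₂) :
    GroupSimBounded sim d α (.node T₁ T₂) S := by
  intro i hi j hj
  rw [groupSim_node_left]
  rw [BTree.leaves_node, Finset.mem_union] at hi
  rcases hi with hi | hi
  · obtain ⟨k, hk⟩ := T₂.leaves_nonempty
    exact max_le (h₁ i hi j hj)
      (le_mul_of_min_le hultra hα (hmax₂.trans (h₁₂ i hi k hk)) (h₂ k hk j hj))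
  · obtain ⟨k, hk⟩ := T₁.leaves_nonempty
    refine max_le (le_mul_of_min_le hultra hα ?_ (h₁ k hk j hj)) (h₂ i hi j hj)
    rw [hd]
    exact hmax₁.trans (h₁₂ k hk i hi)

theorem GroupSimBounded.node_right {T₁ T₂ S : BTree ι} (hd : ∀ i j, d i j = d j i)
    (hultra : ∀ i k j, min (d i k) (d k j) ≤ d i j) (hα : 0 ≤ 1 + α)
    (h₁₂ : GroupSimBounded sim d α T₁ T₂)
    (h₁ : GroupSimBounded sim d α S T₁) (h₂ : GroupSimBounded sim d α S T₂)
    (hmax₁ : groupSim sim S T₁ ≤ groupSim sim T₁ T₂)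
    (hmax₂ : groupSim sim S T₂ ≤ groupSim sim T₁ T₂) :
    GroupSimBounded sim d α S (.node T₁ T₂) := by
  intro i hi j hj
  rw [groupSim_node_right]
  rw [BTree.leaves_node, Finset.mem_union] at hj
  rcases hj with hj | hj
  · obtain ⟨k, hk⟩ := T₂.leaves_nonempty
    refine max_le (h₁ i hi j hj) (le_mul_of_min_le hultra hα (h₂ i hi k hk) ?_)
    rw [hd]
    exact hmax₂.trans (h₁₂ j hj k hk)
  · obtain ⟨k, hk⟩ := T₁.leaves_nonempty
    exact max_le
      (le_mul_of_min_le hultra hα (h₁ i hi k hk) (hmax₁.trans (h₁₂ k hk j hj))) (h₂ i hi j hj)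

variable (sim d α) in
structure LinkageInvariant (C : Finset (BTree ι)) : Prop where
  pairwiseDisjoint : (C : Set (BTree ι)).PairwiseDisjoint BTree.leaves
  exists_mem_leaves : ∀ x, ∃ S ∈ C, x ∈ S.leaves
  recordedApprox : ∀ S ∈ C, RecordedApprox sim d α S
  groupSimBounded : (C : Set (BTree ι)).Pairwise (GroupSimBounded sim d α)

theorem linkageInvariant_leaves [Fintype ι] (hsim : ∀ i j, i ≠ j → sim i j ≤ (1 + α) * d i j) :
    LinkageInvariant sim d α (Finset.univ.image .leaf) := by
  refine ⟨?_, fun x => ⟨.leaf x, by simp⟩, by simpa using recordedApprox_leaf, ?_⟩ <;>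
    simp only [Finset.coe_image, Finset.coe_univ, Set.image_univ] <;>
    rintro _ ⟨a, rfl⟩ _ ⟨b, rfl⟩ hab
  · simpa [Function.onFun] using fun h => hab (congrArg _ h)
  · intro i hi j hj
    rw [BTree.leaves_leaf, Finset.mem_singleton] at hi hj
    subst hi hj
    rw [groupSim_leaf]
    exact hsim i j fun h => hab (congrArg _ h)

theorem LinkageInvariant.greedyStep {C D : Finset (BTree ι)} (hd : ∀ i j, d i j = d j i)
    (hultra : ∀ i k j, min (d i k) (d k j) ≤ d i j) (hα : 0 ≤ 1 + α)
    (hsim : ∀ i j, i ≠ j → (1 - α) * d i j ≤ sim i j)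
    (hC : LinkageInvariant sim d α C) (hCD : GreedyStep sim C D) : LinkageInvariant sim d α D := by
  cases hCD with | step T₁ T₂ h₁ h₂ hne hmax =>
  obtain ⟨hdisj, hcover, happrox, hbound⟩ := hC
  set C' := (C.erase T₁).erase T₂
  have hC' : ∀ {S}, S ∈ C' ↔ S ≠ T₂ ∧ S ≠ T₁ ∧ S ∈ C := by
    simp [C', Finset.mem_erase]
  have hC'C : (C' : Set (BTree ι)) ⊆ C := fun S hS => (hC'.mp hS).2.2
  refine ⟨?_, fun x => ?_, ?_, ?_⟩
  · rw [Finset.coe_insert]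
    refine (hdisj.subset hC'C).insert fun S hS _ => ?_
    obtain ⟨hS₂, hS₁, hS⟩ := hC'.mp hS
    rw [BTree.leaves_node, Finset.disjoint_union_left]
    exact ⟨hdisj h₁ hS (Ne.symm hS₁), hdisj h₂ hS (Ne.symm hS₂)⟩
  · obtain ⟨S, hS, hx⟩ := hcover x
    by_cases hS₁ : S = T₁
    · exact ⟨_, Finset.mem_insert_self _ _, by simp [← hS₁, hx]⟩
    by_cases hS₂ : S = T₂
    · exact ⟨_, Finset.mem_insert_self _ _, by simp [← hS₂, hx]⟩
    exact ⟨S, Finset.mem_insert_of_mem (hC'.mpr ⟨hS₂, hS₁, hS⟩), hx⟩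
  · rw [Finset.forall_mem_insert]
    exact ⟨(happrox T₁ h₁).node hd hsim (hdisj h₁ h₂ hne) (happrox T₂ h₂) (hbound h₁ h₂ hne),
      fun S hS => happrox S (hC'C hS)⟩
  · rw [Finset.coe_insert]
    refine (hbound.mono hC'C).insert fun S hS _ => ?_
    obtain ⟨hS₂, hS₁, hS⟩ := hC'.mp hS
    exact ⟨.node_left hd hultra hα (hbound h₁ h₂ hne) (hbound h₁ hS (Ne.symm hS₁))
        (hbound h₂ hS (Ne.symm hS₂)) (hmax _ h₁ _ hS (Ne.symm hS₁)) (hmax _ h₂ _ hS (Ne.symm hS₂)),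
      .node_right hd hultra hα (hbound h₁ h₂ hne) (hbound hS h₁ hS₁) (hbound hS h₂ hS₂)
        (hmax _ hS _ h₁ hS₁) (hmax _ hS _ h₂ hS₂)⟩

theorem LinkageInvariant.of_reflTransGen [Fintype ι] {C : Finset (BTree ι)}
    (hd : ∀ i j, d i j = d j i) (hultra : ∀ i k j, min (d i k) (d k j) ≤ d i j)
    (hα : 0 ≤ 1 + α)
    (hsim : ∀ i j, i ≠ j → (1 - α) * d i j ≤ sim i j ∧ sim i j ≤ (1 + α) * d i j)
    (hrun : Relation.ReflTransGen (GreedyStep sim) (Finset.univ.image .leaf) C) :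
    LinkageInvariant sim d α C := by
  induction hrun with
  | refl => exact linkageInvariant_leaves fun i j hij => (hsim i j hij).2
  | tail _ hstep ih => exact ih.greedyStep hd hultra hα (fun i j hij => (hsim i j hij).1) hstep

theorem LinkageInvariant.approx_of_singleton {T : BTree ι} (h : LinkageInvariant sim d α {T})
    {i j : ι} (hij : i ≠ j) :
    (1 - α) * d i j ≤ recordedVal sim (T.lca i j) ∧
      recordedVal sim (T.lca i j) ≤ (1 + α) * d i j := by
  have hT : ∀ x, x ∈ T.leaves := fun x => by
    obtain ⟨S, hS, hx⟩ := h.exists_mem_leaves x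
    rwa [Finset.mem_singleton.mp hS] at hx
  exact h.recordedApprox T (Finset.mem_singleton_self T) i (hT i) j (hT j) hij

end MaxLinkage

theorem greedy_linkage_approx_general (ι : Type) [Fintype ι] [DecidableEq ι]
    (P : BTree ι) (hnodup : P.leavesList.Nodup) (hleaves : P.leaves = Finset.univ)
    (f : BTree ι → ℝ)
    (hanc : ∀ S S' : BTree ι, BTree.Subtree S' S → BTree.Subtree S P → S' ≠ S → f S < f S')
    (α : ℝ) (hα0 : 0 ≤ α)
    (sim : ι → ι → ℝ)
    (hsim : ∀ i j : ι, i ≠ j →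
      (1 - α) * f (P.lca i j) ≤ sim i j ∧ sim i j ≤ (1 + α) * f (P.lca i j))
    (T : BTree ι)
    (hrun : Relation.ReflTransGen (GreedyStep sim)
      (Finset.univ.image BTree.leaf) {T}) :
    ∀ i j : ι, i ≠ j →
      (1 - α) * f (P.lca i j) ≤ recordedVal sim (T.lca i j) ∧
      recordedVal sim (T.lca i j) ≤ (1 + α) * f (P.lca i j) := by
  have hf : ∀ S S', BTree.Subtree S' S → BTree.Subtree S P → f S ≤ f S' := fun S S' h hS => by
    rcases eq_or_ne S' S with rfl | hne
    · rfl
    · exact (hanc S S' h hS hne).le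
  have hP : ∀ x, x ∈ P.leaves := by simp [hleaves]
  have hultra : ∀ i k j, min (f (P.lca i k)) (f (P.lca k j)) ≤ f (P.lca i j) := fun i k j =>
    BTree.min_le_of_antitone_lca hnodup hf (hP i) (hP k) (hP j)
  have hinv := LinkageInvariant.of_reflTransGen (fun i j => by rw [P.lca_comm]) hultra
    (by linarith) hsim hrun
  exact fun i j hij => hinv.approx_of_singleton hij

/-- Given a ground-truth tree `(B,P,f)` and a similarity function `sim` with
`(1−α)·f(LCA_P(B_i,B_j)) ≤ sim(B_i,B_j) ≤ (1+α)·f(LCA_P(B_i,B_j))` for all `i ≠ j`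
(`0 ≤ α < 1`), any run of the greedy max-linkage procedure starting from the singleton groups
and ending with a single tree `T` (with recorded internal-node values `f'`) satisfies
`(1−α)·f(LCA_P(B_i,B_j)) ≤ f'(LCA_T(B_i,B_j)) ≤ (1+α)·f(LCA_P(B_i,B_j))` for all `i ≠ j`. -/
theorem greedy_linkage_approx (ι : Type) [Fintype ι] [DecidableEq ι]
    (P : BTree ι) (hnodup : P.leavesList.Nodup) (hleaves : P.leaves = Finset.univ)
    (f : BTree ι → ℝ)
    (hf01 : ∀ S : BTree ι, BTree.Subtree S P → 0 ≤ f S ∧ f S ≤ 1)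
    (hanc : ∀ S S' : BTree ι, BTree.Subtree S' S → BTree.Subtree S P → S' ≠ S → f S < f S')
    (α : ℝ) (hα0 : 0 ≤ α) (hα1 : α < 1)
    (sim : ι → ι → ℝ) (hsymm : ∀ i j, sim i j = sim j i)
    (hsim : ∀ i j : ι, i ≠ j →
      (1 - α) * f (P.lca i j) ≤ sim i j ∧ sim i j ≤ (1 + α) * f (P.lca i j))
    (T : BTree ι)
    (hrun : Relation.ReflTransGen (GreedyStep sim)
      (Finset.univ.image BTree.leaf) {T}) :
    ∀ i j : ι, i ≠ j →
      (1 - α) * f (P.lca i j) ≤ recordedVal sim (T.lca i j) ∧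
      recordedVal sim (T.lca i j) ≤ (1 + α) * f (P.lca i j) :=
  greedy_linkage_approx_general ι P hnodup hleaves f hanc α hα0 sim hsim T hrun
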